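/- Let G be a finite group, p a prime, S ∈ Syl_p(G), and let P, Q ≤ S be G-conjugate subgroups with N_S(P) ∈ Syl_p(N_G(P)). Then there exists g ∈ G such that gQg⁻¹ = P and g·N_S(Q)·g⁻¹ ≤ N_S(P). -/

import Mathlib

/-!
Conjugate `N_S(Q)` back by `h⁻¹`: the result `h⁻¹ N_S(Q) h` is a `p`-subgroup of `N_G(P)`, so by
Sylow's theorems in `N_G(P)` some `x ∈ N_G(P)` conjugates it into the Sylow subgroup `N_S(P)`.
Since `x` normalizes `P`, the element `g = x h⁻¹` does the job.
-/

/-- The conjugate subgroup `g P g⁻¹`. -/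
def conjBy {G : Type*} [Group G] (g : G) (P : Subgroup G) : Subgroup G :=
  P.map (MulAut.conj g).toMonoidHom

open Pointwise Subgroup

lemma conjBy_eq_smul {G : Type*} [Group G] (g : G) (P : Subgroup G) :
    conjBy g P = MulAut.conj g • P :=
  rfl

section Conj

variable {G : Type*} [Group G]

lemma Subgroup.conj_smul_normalizer (g : G) (P : Subgroup G) :
    MulAut.conj g • normalizer (P : Set G) = normalizer ((MulAut.conj g • P : Subgroup G) : Set G) :=
  map_equiv_normalizer_eq P (MulAut.conj g)

lemma Subgroup.conj_smul_eq_self_of_mem_normalizer {P : Subgroup G} {g : G}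
    (hg : g ∈ normalizer (P : Set G)) : MulAut.conj g • P = P :=
  mem_normalizer_iff_map_conj_eq.mp hg

variable {p : ℕ} [Fact p.Prime]

theorem Sylow.exists_conj_smul_le [Finite (Sylow p G)] (T : Sylow p G) {K : Subgroup G}
    (hK : IsPGroup p K) : ∃ g : G, MulAut.conj g • K ≤ T := by
  obtain ⟨R, hKR⟩ := hK.exists_le_sylow
  obtain ⟨g, rfl⟩ := MulAction.exists_smul_eq G R T
  exact ⟨g, pointwise_smul_le_pointwise_smul_iff.mpr hKR⟩

theorem IsPGroup.exists_mem_conj_smul_le {H L K : Subgroup G} [Finite H]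
    (hL : ∃ T : Sylow p H, (T : Subgroup H) = L.subgroupOf H) (hK : IsPGroup p K) (hKH : K ≤ H) :
    ∃ x ∈ H, MulAut.conj x • K ≤ L := by
  obtain ⟨T, hT⟩ := hL
  have hKp : IsPGroup p (K.subgroupOf H) := hK.comap_of_injective H.subtype H.subtype_injective
  obtain ⟨x, hx⟩ := T.exists_conj_smul_le hKp
  rw [hT, conj_smul_subgroupOf hKH] at hx
  have hxH : MulAut.conj (x : G) • K ⊓ H ≤ L ⊓ H := by
    simpa only [subgroupOf_map_subtype] using map_mono (f := H.subtype) hx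
  exact ⟨x, x.2, (le_inf le_rfl (conj_smul_le_of_le hKH x)).trans (hxH.trans inf_le_left)⟩

end Conj

theorem stmt13_general {p : ℕ} (hp : p.Prime) {G : Type*} [Group G] [Finite G]
    (S : Sylow p G) (P Q : Subgroup G)
    (hconj : ∃ h : G, conjBy h P = Q)
    (hFN : ∃ T : Sylow p ↥(Subgroup.normalizer (P : Set G)),
      (T : Subgroup ↥(Subgroup.normalizer (P : Set G)))
        = ((S : Subgroup G) ⊓ (Subgroup.normalizer (P : Set G))).subgroupOf (Subgroup.normalizer (P : Set G))) :
    ∃ g : G, conjBy g Q = P ∧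
      conjBy g ((S : Subgroup G) ⊓ (Subgroup.normalizer (Q : Set G))) ≤ (S : Subgroup G) ⊓ (Subgroup.normalizer (P : Set G)) := by
  have := Fact.mk hp
  obtain ⟨h, rfl⟩ := hconj
  simp only [conjBy_eq_smul]
  have hNQ : MulAut.conj h⁻¹ • ((S : Subgroup G) ⊓ normalizer ((MulAut.conj h • P : Subgroup G) : Set G))
      = MulAut.conj h⁻¹ • (S : Subgroup G) ⊓ normalizer (P : Set G) := by
    rw [smul_inf, ← conj_smul_normalizer, map_inv, inv_smul_smul]
  obtain ⟨x, hxN, hx⟩ := ((h⁻¹ • S).isPGroup'.to_le (hNQ ▸ inf_le_left)).exists_mem_conj_smul_le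
    hFN (hNQ ▸ inf_le_right)
  refine ⟨x * h⁻¹, ?_, ?_⟩
  · rw [map_mul, mul_smul, map_inv, inv_smul_smul, conj_smul_eq_self_of_mem_normalizer hxN]
  · rwa [map_mul, mul_smul]

/-- If `P, Q ≤ S ∈ Syl_p(G)` are `G`-conjugate and `N_S(P) ∈ Syl_p(N_G(P))`, then there is
`g ∈ G` with `gQg⁻¹ = P` and `g N_S(Q) g⁻¹ ≤ N_S(P)`. -/
theorem stmt13 {p : ℕ} (hp : p.Prime) {G : Type*} [Group G] [Finite G]
    (S : Sylow p G) (P Q : Subgroup G) (hP : P ≤ S) (hQ : Q ≤ S)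
    (hconj : ∃ h : G, conjBy h P = Q)
    (hFN : ∃ T : Sylow p ↥(Subgroup.normalizer (P : Set G)),
      (T : Subgroup ↥(Subgroup.normalizer (P : Set G)))
        = ((S : Subgroup G) ⊓ (Subgroup.normalizer (P : Set G))).subgroupOf (Subgroup.normalizer (P : Set G))) :
    ∃ g : G, conjBy g Q = P ∧
      conjBy g ((S : Subgroup G) ⊓ (Subgroup.normalizer (Q : Set G))) ≤ (S : Subgroup G) ⊓ (Subgroup.normalizer (P : Set G)) :=
  stmt13_general hp S P Q hconj hFN
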